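/- Consider the augmented system (f_A, g_A, h_A) on ℝ × ℝ^{n_A} built from infinitely differentiable F : ℝ×ℝ^n → ℝ^n, G : ℝ×ℝ^n → ℝ^{n×r}, h : ℝ×ℝ^n → ℝ^m with r = m, and its integral augmented system (f_I, g_I, h_I) on ℝ × ℝ^{n_A+m} for a parameter β > 0. Fix l ∈ {1,…,m} and σ_l ≥ 1, and suppose L_{g_A} L_{f_A}^{i} h_{A,l}(t,x_A) = 0 for all (t,x_A) and all 0 ≤ i ≤ σ_l − 2. Then for every (t, x_A, ξ) ∈ ℝ × ℝ^{n_A} × ℝ^m: (a) L_{f_I}^{σ_l} h_{I,l}(t,(x_A,ξ)) = L_{f_A}^{σ_l} h_{A,l}(t,x_A) + L_{g_A} L_{f_A}^{σ_l−1} h_{A,l}(t,x_A)·s_β(ξ); and (b) L_{g_I} L_{f_I}^{σ_l} h_{I,l}(t,(x_A,ξ)) = L_{g_A} L_{f_A}^{σ_l−1} h_{A,l}(t,x_A)·diag( s_β'(ξ_1),…,s_β'(ξ_m) ), where s_β'(v) = 2β·e^{−v}/(e^{−v}+1)². -/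

import Mathlib

noncomputable section

open Real Finset

/-- One-step Lie derivative of a scalar function `ψ` along the time-varying vector field `F`
on a general state space: `L_F ψ (t,x) = (∂ₓ ψ)·F + ∂ₜ ψ`, expressed as the total (Fréchet)
derivative of `ψ` in the direction `(1, F(t,x))`. -/
def lieF {E : Type*} [NormedAddCommGroup E] [NormedSpace ℝ E]
    (F : ℝ × E → E) (ψ : ℝ × E → ℝ) : ℝ × E → ℝ :=
  fun p => fderiv ℝ ψ p (1, F p)

/-- Iterated Lie derivative `L_F^j ψ`, with `L_F^0 ψ = ψ`. -/
def lieFIter {E : Type*} [NormedAddCommGroup E] [NormedSpace ℝ E]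
    (F : ℝ × E → E) (ψ : ℝ × E → ℝ) (j : ℕ) : ℝ × E → ℝ :=
  (lieF F)^[j] ψ

/-- Mixed Lie derivative `L_Ĝ ψ (t,x) = (∂ₓ ψ)(t,x)·Ĝ(t,x) ∈ ℝ^{1×r}` as a row vector,
where the matrix field `Ĝ` is given through its columns `Ĝ(t,x) j ∈ E`. -/
def lieGcol {E : Type*} [NormedAddCommGroup E] [NormedSpace ℝ E] {r : ℕ}
    (G : ℝ × E → Fin r → E) (ψ : ℝ × E → ℝ) : ℝ × E → Fin r → ℝ :=
  fun p j => fderiv ℝ ψ p (0, G p j)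

/-- The augmented state space `x_A = (x, z̃)`, where `z̃` stacks the scalars
`z_k^{(0)}, …, z_k^{(ρ_k-1)}` for `k = 1,…,m`. -/
abbrev AugState (n m : ℕ) (ρ : Fin m → ℕ) : Type :=
  (Fin n → ℝ) × (∀ k : Fin m, Fin (ρ k) → ℝ)

/-- The augmented vector field `f_A`: first block `F(t,x)`; the `k`-th slack block is the
shift `(z_k^{(1)}, …, z_k^{(ρ_k-1)}, 0)`. -/
def augF {n m : ℕ} (ρ : Fin m → ℕ) (F : ℝ × (Fin n → ℝ) → Fin n → ℝ) :
    ℝ × AugState n m ρ → AugState n m ρ :=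
  fun p =>
    (F (p.1, p.2.1),
      fun k i => if hi : (i : ℕ) + 1 < ρ k then p.2.2 k ⟨(i : ℕ) + 1, hi⟩ else 0)

/-- The columns of the augmented input matrix `g_A`: first `n` rows `G(t,x)·D(z)` with
`D(z) = diag(z_1^{(0)},…,z_r^{(0)})`; remaining rows zero, except that the row in the slot
of `z_k^{(ρ_k-1)}` equals the `k`-th standard basis row. -/
def augG {n m : ℕ} (ρ : Fin m → ℕ) (G : ℝ × (Fin n → ℝ) → Fin n → Fin m → ℝ) :
    ℝ × AugState n m ρ → Fin m → AugState n m ρ :=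
  fun p j =>
    ((fun a => G (p.1, p.2.1) a j *
        (if h : 0 < ρ j then p.2.2 j ⟨0, h⟩ else 0)),
      fun k i => if k = j ∧ (i : ℕ) = ρ k - 1 then 1 else 0)

/-- The augmented output `h_A(t,(x,z̃)) = h(t,x)`, `l`-th component. -/
def augH {n m : ℕ} (ρ : Fin m → ℕ) (h : ℝ × (Fin n → ℝ) → Fin m → ℝ) (l : Fin m) :
    ℝ × AugState n m ρ → ℝ :=
  fun p => h (p.1, p.2.1) l

/-- The integral augmented state space `x_I = (x_A, ξ)`. -/
abbrev IntState (n m : ℕ) (ρ : Fin m → ℕ) : Type :=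
  AugState n m ρ × (Fin m → ℝ)

/-- The bounded saturation function `s_β(v) = 2β(1/(e^{-v}+1) - 1/2)` (Eq. (16) of the paper). -/
def sBeta (β v : ℝ) : ℝ := 2 * β * (1 / (Real.exp (-v) + 1) - 1 / 2)

/-- The integral augmented vector field `f_I(t,(x_A,ξ)) = (f_A(t,x_A) + g_A(t,x_A)·s_β(ξ), 0)`. -/
def intF {n m : ℕ} (ρ : Fin m → ℕ) (F : ℝ × (Fin n → ℝ) → Fin n → ℝ)
    (G : ℝ × (Fin n → ℝ) → Fin n → Fin m → ℝ) (β : ℝ) :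
    ℝ × IntState n m ρ → IntState n m ρ :=
  fun p =>
    (augF ρ F (p.1, p.2.1) + ∑ j, sBeta β (p.2.2 j) • augG ρ G (p.1, p.2.1) j, 0)

/-- The columns of the integral augmented input matrix `g_I = (0 ; I_m)`. -/
def intG {n m : ℕ} (ρ : Fin m → ℕ) :
    ℝ × IntState n m ρ → Fin m → IntState n m ρ :=
  fun _ j => (0, Pi.single j 1)

/-- The integral augmented output `h_I(t,(x_A,ξ)) = h_A(t,x_A)`, `l`-th component. -/
def intH {n m : ℕ} (ρ : Fin m → ℕ) (h : ℝ × (Fin n → ℝ) → Fin m → ℝ) (l : Fin m) :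
    ℝ × IntState n m ρ → ℝ :=
  fun p => augH ρ h l (p.1, p.2.1)

/-!
A function of `(t, x_A)` alone does not see `ξ`, so its Lie derivative along
`f_I = (f_A + g_A·s_β(ξ), 0)` is its Lie derivative along `f_A` plus `(L_{g_A} ·)·s_β(ξ)`.
By the relative-degree hypothesis this correction vanishes for the first `σ_l - 1` steps, so
`L_{f_I}^i h_I = L_{f_A}^i h_A` for `i < σ_l`, and it first appears at step `σ_l`: this is (a).
The columns of `g_I` point in the `ξ`-directions only, and in (a) only `s_β(ξ)` depends on `ξ`;
differentiating it gives (b).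
-/

open scoped ContDiff

section LieDerivatives

variable {E X : Type*} [NormedAddCommGroup E] [NormedSpace ℝ E]
  [NormedAddCommGroup X] [NormedSpace ℝ X]

lemma lieFIter_succ (F : ℝ × E → E) (ψ : ℝ × E → ℝ) (j : ℕ) :
    lieFIter F ψ (j + 1) = lieF F (lieFIter F ψ j) :=
  Function.iterate_succ_apply' _ _ _

lemma ContDiff.lieF {F : ℝ × E → E} {ψ : ℝ × E → ℝ} (hψ : ContDiff ℝ ∞ ψ)
    (hF : ContDiff ℝ ∞ F) : ContDiff ℝ ∞ (lieF F ψ) :=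
  (hψ.fderiv_right (by exact_mod_cast le_top)).clm_apply (contDiff_const.prodMk hF)

lemma ContDiff.lieFIter {F : ℝ × E → E} {ψ : ℝ × E → ℝ} (hψ : ContDiff ℝ ∞ ψ)
    (hF : ContDiff ℝ ∞ F) (j : ℕ) : ContDiff ℝ ∞ (lieFIter F ψ j) := by
  induction j with
  | zero => exact hψ
  | succ j ih => rw [lieFIter_succ]; exact ih.lieF hF

lemma ContDiff.lieGcol_apply {r : ℕ} {G : ℝ × E → Fin r → E} {ψ : ℝ × E → ℝ} {j : Fin r}
    (hψ : ContDiff ℝ ∞ ψ) (hG : ContDiff ℝ ∞ (fun p => G p j)) :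
    ContDiff ℝ ∞ (fun p => lieGcol G ψ p j) :=
  (hψ.fderiv_right (by exact_mod_cast le_top)).clm_apply (contDiff_const.prodMk hG)

lemma hasFDerivAt_comp_fst_snd_fst {ψ : ℝ × E → ℝ} {ψ' : ℝ × E →L[ℝ] ℝ}
    {p : ℝ × (E × X)} (hψ : HasFDerivAt ψ ψ' (p.1, p.2.1)) :
    HasFDerivAt (fun q : ℝ × (E × X) => ψ (q.1, q.2.1))
      (ψ'.comp ((ContinuousLinearMap.fst ℝ ℝ (E × X)).prod
        ((ContinuousLinearMap.fst ℝ E X).comp (ContinuousLinearMap.snd ℝ ℝ (E × X))))) p :=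
  hψ.comp p (hasFDerivAt_fst.prodMk hasFDerivAt_snd.fst)

lemma fderiv_comp_fst_snd_fst {ψ : ℝ × E → ℝ} (hψ : Differentiable ℝ ψ)
    (p : ℝ × (E × X)) (v : ℝ × (E × X)) :
    fderiv ℝ (fun q : ℝ × (E × X) => ψ (q.1, q.2.1)) p v
      = fderiv ℝ ψ (p.1, p.2.1) (v.1, v.2.1) := by
  rw [(hasFDerivAt_comp_fst_snd_fst (X := X) (hψ _).hasFDerivAt).fderiv]
  rfl

lemma lieF_comp_fst_snd_fst {r : ℕ} {Φ : ℝ × (E × X) → E × X} {f : ℝ × E → E}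
    {g : ℝ × E → Fin r → E} {u : ℝ × (E × X) → Fin r → ℝ}
    (hΦ : ∀ p, (Φ p).1 = f (p.1, p.2.1) + ∑ j, u p j • g (p.1, p.2.1) j)
    {ψ : ℝ × E → ℝ} (hψ : Differentiable ℝ ψ) (p : ℝ × (E × X)) :
    lieF Φ (fun q => ψ (q.1, q.2.1)) p =
      lieF f ψ (p.1, p.2.1) + ∑ j, lieGcol g ψ (p.1, p.2.1) j * u p j := by
  have hdir : ((1 : ℝ), (Φ p).1)
      = ((1 : ℝ), f (p.1, p.2.1)) + ∑ j, u p j • ((0 : ℝ), g (p.1, p.2.1) j) := by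
    ext <;> simp [hΦ, Prod.fst_sum, Prod.snd_sum]
  simp only [lieF, lieGcol, fderiv_comp_fst_snd_fst hψ, hdir, map_add, map_sum, map_smul,
    smul_eq_mul, mul_comm (u p _)]

lemma lieFIter_comp_fst_snd_fst {r : ℕ} {Φ : ℝ × (E × X) → E × X} {f : ℝ × E → E}
    {g : ℝ × E → Fin r → E} {u : ℝ × (E × X) → Fin r → ℝ}
    (hΦ : ∀ p, (Φ p).1 = f (p.1, p.2.1) + ∑ j, u p j • g (p.1, p.2.1) j)
    {ψ : ℝ × E → ℝ} (hψ : ∀ i, Differentiable ℝ (lieFIter f ψ i)) {s : ℕ}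
    (hzero : ∀ i < s, ∀ p, lieGcol g (lieFIter f ψ i) p = 0) :
    ∀ i ≤ s, lieFIter Φ (fun q => ψ (q.1, q.2.1)) i = fun q => lieFIter f ψ i (q.1, q.2.1) := by
  intro i hi
  induction i with
  | zero => rfl
  | succ i ih =>
    funext p
    rw [lieFIter_succ, ih (by omega), lieF_comp_fst_snd_fst hΦ (hψ i), hzero i (by omega)]
    simp [lieFIter_succ]

lemma lieFIter_succ_comp_fst_snd_fst {r : ℕ} {Φ : ℝ × (E × X) → E × X} {f : ℝ × E → E}
    {g : ℝ × E → Fin r → E} {u : ℝ × (E × X) → Fin r → ℝ}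
    (hΦ : ∀ p, (Φ p).1 = f (p.1, p.2.1) + ∑ j, u p j • g (p.1, p.2.1) j)
    {ψ : ℝ × E → ℝ} (hψ : ∀ i, Differentiable ℝ (lieFIter f ψ i)) {s : ℕ}
    (hzero : ∀ i < s, ∀ p, lieGcol g (lieFIter f ψ i) p = 0) (p : ℝ × (E × X)) :
    lieFIter Φ (fun q => ψ (q.1, q.2.1)) (s + 1) p =
      lieFIter f ψ (s + 1) (p.1, p.2.1) +
        ∑ j, lieGcol g (lieFIter f ψ s) (p.1, p.2.1) j * u p j := by
  rw [lieFIter_succ, lieFIter_comp_fst_snd_fst hΦ hψ hzero s le_rfl,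
    lieF_comp_fst_snd_fst hΦ (hψ s), lieFIter_succ]

lemma fderiv_add_sum_mul_apply_single {m : ℕ} {A : ℝ × E → ℝ} {B : ℝ × E → Fin m → ℝ}
    {φ φ' : ℝ → ℝ} (hA : Differentiable ℝ A) (hB : ∀ k, Differentiable ℝ (fun q => B q k))
    (hφ : ∀ v, HasDerivAt φ (φ' v) v) (p : ℝ × (E × (Fin m → ℝ))) (j : Fin m) :
    fderiv ℝ (fun q : ℝ × (E × (Fin m → ℝ)) =>
        A (q.1, q.2.1) + ∑ k, B (q.1, q.2.1) k * φ (q.2.2 k)) p (0, (0, Pi.single j 1))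
      = B (p.1, p.2.1) j * φ' (p.2.2 j) := by
  have hξ (k : Fin m) : HasFDerivAt (fun q : ℝ × (E × (Fin m → ℝ)) => φ (q.2.2 k))
      (φ' (p.2.2 k) • (ContinuousLinearMap.proj k).comp
        ((ContinuousLinearMap.snd ℝ E (Fin m → ℝ)).comp
          (ContinuousLinearMap.snd ℝ ℝ (E × (Fin m → ℝ))))) p :=
    (hφ _).comp_hasFDerivAt p (ContinuousLinearMap.hasFDerivAt
      ((ContinuousLinearMap.proj k).comp ((ContinuousLinearMap.snd ℝ E (Fin m → ℝ)).comp
          (ContinuousLinearMap.snd ℝ ℝ (E × (Fin m → ℝ))))))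
  rw [((hasFDerivAt_comp_fst_snd_fst (hA _).hasFDerivAt).fun_add (HasFDerivAt.fun_sum fun k _ =>
    (hasFDerivAt_comp_fst_snd_fst (hB k _).hasFDerivAt).fun_mul (hξ k))).fderiv]
  simp [Pi.single_apply, Prod.mk_zero_zero]

end LieDerivatives

section AugmentedSystem

variable {n m : ℕ}

lemma hasDerivAt_sBeta (β v : ℝ) :
    HasDerivAt (sBeta β) (2 * β * exp (-v) / (exp (-v) + 1) ^ 2) v := by
  have hden : HasDerivAt (fun w => exp (-w) + 1) (-exp (-v)) v := by
    simpa using (hasDerivAt_neg v).exp.add_const 1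
  have hsBeta : sBeta β = fun w => 2 * β * ((exp (-w) + 1)⁻¹ - 1 / 2) := by
    funext w
    simp only [sBeta, one_div]
  rw [hsBeta]
  exact (((hden.inv (by positivity)).sub_const (1 / 2)).const_mul (2 * β)).congr_deriv (by ring)

lemma contDiff_augState_apply (ρ : Fin m → ℕ) (k : Fin m) (i : Fin (ρ k)) :
    ContDiff ℝ ∞ (fun p : ℝ × AugState n m ρ => p.2.2 k i) :=
  contDiff_pi.mp (contDiff_pi.mp contDiff_snd.snd k) i

lemma contDiff_augH (ρ : Fin m → ℕ) {h : ℝ × (Fin n → ℝ) → Fin m → ℝ}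
    (hh : ContDiff ℝ ∞ h) (l : Fin m) : ContDiff ℝ ∞ (augH ρ h l) :=
  contDiff_pi.mp (hh.comp (contDiff_fst.prodMk contDiff_snd.fst)) l

lemma contDiff_augF (ρ : Fin m → ℕ) {F : ℝ × (Fin n → ℝ) → Fin n → ℝ}
    (hF : ContDiff ℝ ∞ F) : ContDiff ℝ ∞ (augF ρ F) := by
  refine (hF.comp (contDiff_fst.prodMk contDiff_snd.fst)).prodMk
    (contDiff_pi.mpr fun k => contDiff_pi.mpr fun i => ?_)
  split_ifs
  exacts [contDiff_augState_apply ρ k _, contDiff_const]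

lemma contDiff_augG_apply (ρ : Fin m → ℕ) {G : ℝ × (Fin n → ℝ) → Fin n → Fin m → ℝ}
    (hG : ContDiff ℝ ∞ G) (j : Fin m) :
    ContDiff ℝ ∞ (fun p : ℝ × AugState n m ρ => augG ρ G p j) := by
  refine ContDiff.prodMk (contDiff_pi.mpr fun a => ?_) contDiff_const
  refine (contDiff_pi.mp (contDiff_pi.mp
    (hG.comp (contDiff_fst.prodMk contDiff_snd.fst)) a) j).mul ?_
  split_ifs
  exacts [contDiff_augState_apply ρ j _, contDiff_const]

end AugmentedSystem

theorem integral_lie_formulas_at_relative_degree_general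
    {n m : ℕ} (ρ : Fin m → ℕ)
    (F : ℝ × (Fin n → ℝ) → Fin n → ℝ)
    (G : ℝ × (Fin n → ℝ) → Fin n → Fin m → ℝ)
    (h : ℝ × (Fin n → ℝ) → Fin m → ℝ)
    (hF : ContDiff ℝ (⊤ : ℕ∞) F) (hG : ContDiff ℝ (⊤ : ℕ∞) G)
    (hh : ContDiff ℝ (⊤ : ℕ∞) h)
    (β : ℝ)
    (l : Fin m) (σl : ℕ) (hσl : 1 ≤ σl)
    (hzero : ∀ i : ℕ, i + 2 ≤ σl →
      ∀ p : ℝ × AugState n m ρ,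
        lieGcol (augG ρ G) (lieFIter (augF ρ F) (augH ρ h l) i) p = 0) :
    ∀ (t : ℝ) (xA : AugState n m ρ) (ξ : Fin m → ℝ),
      (lieFIter (intF ρ F G β) (intH ρ h l) σl (t, (xA, ξ)) =
        lieFIter (augF ρ F) (augH ρ h l) σl (t, xA) +
          ∑ j, lieGcol (augG ρ G) (lieFIter (augF ρ F) (augH ρ h l) (σl - 1)) (t, xA) j *
            sBeta β (ξ j)) ∧
      (∀ j : Fin m,
        lieGcol (intG ρ) (lieFIter (intF ρ F G β) (intH ρ h l) σl) (t, (xA, ξ)) j =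
          lieGcol (augG ρ G) (lieFIter (augF ρ F) (augH ρ h l) (σl - 1)) (t, xA) j *
            (2 * β * Real.exp (-ξ j) / (Real.exp (-ξ j) + 1) ^ 2)) := by
  intro t xA ξ
  obtain ⟨s, rfl⟩ : ∃ s, σl = s + 1 := ⟨σl - 1, by omega⟩
  rw [Nat.add_sub_cancel]
  have hsmooth (i : ℕ) : ContDiff ℝ ∞ (lieFIter (augF ρ F) (augH ρ h l) i) :=
    (contDiff_augH ρ hh l).lieFIter (contDiff_augF ρ hF) i
  have hformula (p : ℝ × IntState n m ρ) :=
    lieFIter_succ_comp_fst_snd_fst (Φ := intF ρ F G β) (s := s) (fun _ => rfl)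
      (fun i => (hsmooth i).differentiable (by simp)) (fun i hi => hzero i (by omega)) p
  refine ⟨hformula _, fun j => ?_⟩
  change fderiv ℝ (lieFIter (intF ρ F G β) (intH ρ h l) (s + 1)) _ (0, (0, Pi.single j 1)) = _
  rw [show lieFIter (intF ρ F G β) (intH ρ h l) (s + 1) = _ from funext hformula]
  exact fderiv_add_sum_mul_apply_single ((hsmooth (s + 1)).differentiable (by simp))
    (fun k => ((hsmooth s).lieGcol_apply (contDiff_augG_apply ρ hG k)).differentiable (by simp))
    (hasDerivAt_sBeta β) _ j

/-- **Formulas (Eqs. (47)–(48)) in the proof of Corollary 1 of the paper.**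
(a) `L_{f_I}^{σ_l} h_{I,l} = L_{f_A}^{σ_l} h_{A,l} + (L_{g_A} L_{f_A}^{σ_l-1} h_{A,l})·s_β(ξ)`;
(b) `L_{g_I} L_{f_I}^{σ_l} h_{I,l} = (L_{g_A} L_{f_A}^{σ_l-1} h_{A,l})·diag(s_β'(ξ_1),…,s_β'(ξ_m))`
with `s_β'(v) = 2β e^{-v}/(e^{-v}+1)²`. -/
theorem integral_lie_formulas_at_relative_degree
    {n m : ℕ} (ρ : Fin m → ℕ) (hρ : ∀ k, 1 ≤ ρ k)
    (F : ℝ × (Fin n → ℝ) → Fin n → ℝ)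
    (G : ℝ × (Fin n → ℝ) → Fin n → Fin m → ℝ)
    (h : ℝ × (Fin n → ℝ) → Fin m → ℝ)
    (hF : ContDiff ℝ (⊤ : ℕ∞) F) (hG : ContDiff ℝ (⊤ : ℕ∞) G)
    (hh : ContDiff ℝ (⊤ : ℕ∞) h)
    (β : ℝ) (hβ : 0 < β)
    (l : Fin m) (σl : ℕ) (hσl : 1 ≤ σl)
    (hzero : ∀ i : ℕ, i + 2 ≤ σl →
      ∀ p : ℝ × AugState n m ρ,
        lieGcol (augG ρ G) (lieFIter (augF ρ F) (augH ρ h l) i) p = 0) :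
    ∀ (t : ℝ) (xA : AugState n m ρ) (ξ : Fin m → ℝ),
      (lieFIter (intF ρ F G β) (intH ρ h l) σl (t, (xA, ξ)) =
        lieFIter (augF ρ F) (augH ρ h l) σl (t, xA) +
          ∑ j, lieGcol (augG ρ G) (lieFIter (augF ρ F) (augH ρ h l) (σl - 1)) (t, xA) j *
            sBeta β (ξ j)) ∧
      (∀ j : Fin m,
        lieGcol (intG ρ) (lieFIter (intF ρ F G β) (intH ρ h l) σl) (t, (xA, ξ)) j =
          lieGcol (augG ρ G) (lieFIter (augF ρ F) (augH ρ h l) (σl - 1)) (t, xA) j *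
            (2 * β * Real.exp (-ξ j) / (Real.exp (-ξ j) + 1) ^ 2)) :=
  integral_lie_formulas_at_relative_degree_general ρ F G h hF hG hh β l σl hσl hzero
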